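/- Let β, γ ∈ ℕⁿ and set A_α = sqrt( α!(n-1+|α|)!(n-1+|α+β-γ|)! / ((α+β-γ)!(m+n-1+|α|)!(m+n-1+|α+β-γ|)!) ) · (α+β)!(m+n-1+|α+β|)! / (α!(n-1+|α+β|)!) for α ∈ ℕⁿ with α ≥ γ. Then as α → ∞ (each component tending to infinity), A_α / α^{(β+γ)/2} converges to a positive constant independent of α; in particular A_α is comparable to ∏_j α_j^{(β_j+γ_j)/2}. -/

import Mathlib

open MeasureTheory Filter Finset

noncomputable section

namespace FockSob

/-- squared Euclidean norm on ℂⁿ -/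
def Nsq {n : ℕ} (z : Fin n → ℂ) : ℝ := ∑ j, ‖z j‖ ^ 2

/-- the weight ω_{n,m} |z|^{2m} e^{-|z|²} -/
def wgt (n m : ℕ) (z : Fin n → ℂ) : ℝ :=
  ((n - 1).factorial : ℝ) / (Real.pi ^ n * (m + n - 1).factorial) * Nsq z ^ m * Real.exp (-Nsq z)

/-- the measure dV_m on ℂⁿ -/
def dVm (n m : ℕ) : Measure (Fin n → ℂ) :=
  volume.withDensity fun z => ENNReal.ofReal (wgt n m z)

/-- the monomial z^β z̄^γ -/
def mono {n : ℕ} (β γ : Fin n → ℕ) (z : Fin n → ℂ) : ℂ :=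
  (∏ j, z j ^ β j) * ∏ j, (starRingEnd ℂ) (z j) ^ γ j

/-- the normalized monomial e_α -/
def eFun (n m : ℕ) (α : Fin n → ℕ) (z : Fin n → ℂ) : ℂ :=
  (Real.sqrt (((m + n - 1).factorial * (n - 1 + ∑ j, α j).factorial : ℝ) /
      ((∏ j, (α j).factorial) * (n - 1).factorial * (m + n - 1 + ∑ j, α j).factorial)) : ℝ) *
    ∏ j, z j ^ α j

open scoped Classical in
/-- embedding of a function into L²(dV_m) (zero if not square integrable) -/
def toL2 (n m : ℕ) (f : (Fin n → ℂ) → ℂ) : Lp ℂ 2 (dVm n m) :=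
  if h : MemLp f 2 (dVm n m) then h.toLp f else 0

/-- the basis vector e_α as an element of L²(dV_m) -/
def eL2 (n m : ℕ) (α : Fin n → ℕ) : Lp ℂ 2 (dVm n m) := toL2 n m (eFun n m α)

/-- the Fock–Sobolev space: classes in L²(dV_m) with an entire representative -/
def FSS (n m : ℕ) : Submodule ℂ (Lp ℂ 2 (dVm n m)) where
  carrier := {f | ∃ g : (Fin n → ℂ) → ℂ, Differentiable ℂ g ∧ (⇑f) =ᵐ[dVm n m] g}
  zero_mem' := ⟨0, differentiable_const 0, by
    filter_upwards [Lp.coeFn_zero (E := ℂ) (p := 2) (μ := dVm n m)] with z hz using hz⟩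
  add_mem' := by
    rintro f g ⟨F, hF, hfF⟩ ⟨G, hG, hgG⟩
    exact ⟨F + G, hF.add hG, by
      filter_upwards [Lp.coeFn_add f g, hfF, hgG] with z h1 h2 h3 using by
        rw [h1, Pi.add_apply, h2, h3]; rfl⟩
  smul_mem' := by
    rintro c f ⟨F, hF, hfF⟩
    exact ⟨c • F, hF.const_smul c, by
      filter_upwards [Lp.coeFn_smul c f, hfF] with z h1 h2 using by simp [h1, h2]⟩

/-- the closure of the Fock–Sobolev space in L² -/
def FSSc (n m : ℕ) : Submodule ℂ (Lp ℂ 2 (dVm n m)) := (FSS n m).topologicalClosure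

set_option synthInstance.maxHeartbeats 1000000 in
instance (n m : ℕ) : Submodule.HasOrthogonalProjection (FSSc n m) :=
  haveI : CompleteSpace (FSSc n m) :=
    (FSS n m).isClosed_topologicalClosure.completeSpace_coe
  Submodule.HasOrthogonalProjection.ofCompleteSpace _

set_option synthInstance.maxHeartbeats 1000000 in
/-- the projection P_m -/
def projm (n m : ℕ) : Lp ℂ 2 (dVm n m) →L[ℂ] FSSc n m := Submodule.orthogonalProjectionOnto (FSSc n m)

/-- the Toeplitz operator T_φ (defaulting to 0 where undefined) -/
def Toep (n m : ℕ) (φ : (Fin n → ℂ) → ℂ) (u : Lp ℂ 2 (dVm n m)) : Lp ℂ 2 (dVm n m) :=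
  (projm n m (toL2 n m fun z => φ z * u z) : Lp ℂ 2 (dVm n m))

/-- the Hankel operator H_φ = (I - P_m)(φ ·) -/
def Hank (n m : ℕ) (φ : (Fin n → ℂ) → ℂ) (u : Lp ℂ 2 (dVm n m)) : Lp ℂ 2 (dVm n m) :=
  toL2 n m (fun z => φ z * u z) - Toep n m φ u

/-- polynomials in z and z̄ -/
def IsPolyZZ (n : ℕ) (f : (Fin n → ℂ) → ℂ) : Prop :=
  ∃ c : ((Fin n → ℕ) × (Fin n → ℕ)) →₀ ℂ,
    ∀ z, f z = ∑ p ∈ c.support, c p * mono p.1 p.2 z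

/-- holomorphic polynomials (polynomials in z alone) -/
def IsPolyZ (n : ℕ) (f : (Fin n → ℂ) → ℂ) : Prop :=
  ∃ c : (Fin n → ℕ) →₀ ℂ, ∀ z, f z = ∑ β ∈ c.support, c β * ∏ j, z j ^ β j

/-- product of factorials of a multi-index, as a real number -/
def fprod {n : ℕ} (v : Fin n → ℕ) : ℝ := ∏ j, ((v j).factorial : ℝ)

/-- length |v| of a multi-index -/
def msum {n : ℕ} (v : Fin n → ℕ) : ℕ := ∑ j, v j

/-- the coefficient A_α of Lemma 3.1 -/
def Acoef (n m : ℕ) (β γ μ ν : Fin n → ℕ) (α : Fin n → ℕ) : ℝ :=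
  (fprod (fun j => α j + γ j + μ j) *
        ((m + n - 1 + msum fun j => α j + γ j + μ j).factorial : ℝ) /
      (fprod α * ((n - 1 + msum fun j => α j + γ j + μ j).factorial : ℝ)) -
    fprod (fun j => α j + μ j) * fprod (fun j => α j + γ j + μ j - ν j) /
        (fprod α * fprod fun j => α j + μ j - ν j) *
      (((m + n - 1 + msum fun j => α j + μ j).factorial : ℝ) *
          ((n - 1 + msum fun j => α j + μ j - ν j).factorial : ℝ) *
          ((m + n - 1 + msum fun j => α j + γ j + μ j - ν j).factorial : ℝ) /
        (((n - 1 + msum fun j => α j + μ j).factorial : ℝ) *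
          ((m + n - 1 + msum fun j => α j + μ j - ν j).factorial : ℝ) *
          ((n - 1 + msum fun j => α j + γ j + μ j - ν j).factorial : ℝ)))) *
    Real.sqrt (fprod α * ((n - 1 + msum α).factorial : ℝ) *
        ((n - 1 + msum fun j => α j + γ j + μ j - (β j + ν j)).factorial : ℝ) /
      (fprod (fun j => α j + γ j + μ j - (β j + ν j)) *
        ((m + n - 1 + msum α).factorial : ℝ) *
        ((m + n - 1 + msum fun j => α j + γ j + μ j - (β j + ν j)).factorial : ℝ)))

/-- the coefficient of Lemma 2.1 -/
def Tcoef (n m : ℕ) (β γ : Fin n → ℕ) (α : Fin n → ℕ) : ℝ :=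
  Real.sqrt (fprod α * ((n - 1 + msum α).factorial : ℝ) *
      ((n - 1 + msum fun j => α j + β j - γ j).factorial : ℝ) /
    (fprod (fun j => α j + β j - γ j) * ((m + n - 1 + msum α).factorial : ℝ) *
      ((m + n - 1 + msum fun j => α j + β j - γ j).factorial : ℝ))) *
  (fprod (fun j => α j + β j) * ((m + n - 1 + msum fun j => α j + β j).factorial : ℝ) /
    (fprod α * ((n - 1 + msum fun j => α j + β j).factorial : ℝ)))

end FockSob


/-!
Writing every factorial quotient as a falling factorial, the square of the coefficient becomes
`∏ (α_j + β_j)^{(β_j)} · ∏ (α_j + β_j)^{(γ_j)} · R(|α + β|)² / (R(|α|) R(|α + β - γ|))`,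
where `N^{(k)} = N.descFactorial k` and `R(s) = (m + n - 1 + s)^{(m)}`. Since `N^{(k)} ~ N ^ k` and
each argument differs from `α_j`, resp. `|α|`, by a constant, the square is asymptotic to
`∏ α_j ^ (β_j + γ_j)`; the limit constant is `1`.
-/

open Asymptotics Topology

section

variable {ι : Type*} {l : Filter ι}

theorem isEquivalent_of_eventually_eq_add_const {u v : ι → ℝ} {c : ℝ} (hv : Tendsto v l atTop)
    (h : ∀ᶠ i in l, u i = v i + c) : u ~[l] v :=
  (IsEquivalent.refl.add_const_of_norm_tendsto_atTop (tendsto_norm_atTop_atTop.comp hv)).congr_left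
    (h.mono fun _ hi => hi.symm)

theorem isEquivalent_descFactorial_comp {u : ι → ℕ} {v : ι → ℝ}
    (huv : (fun i => (u i : ℝ)) ~[l] v) (hv : Tendsto v l atTop) (k : ℕ) :
    (fun i => ((u i).descFactorial k : ℝ)) ~[l] fun i => v i ^ k :=
  ((isEquivalent_descFactorial k).comp_tendsto
    (tendsto_natCast_atTop_iff.mp (huv.symm.tendsto_atTop hv))).trans (huv.pow k)

theorem tendsto_apply_atTop (j : ι) : Tendsto (fun a : ι → ℕ => a j) atTop atTop :=
  tendsto_atTop_atTop_of_monotone (fun _ _ h => h j) fun b => ⟨fun _ => b, le_rfl⟩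

theorem tendsto_sum_apply_atTop [Fintype ι] [Nonempty ι] :
    Tendsto (fun a : ι → ℕ => ∑ j, a j) atTop atTop :=
  let j : ι := Classical.arbitrary ι
  tendsto_atTop_mono (fun _ => single_le_sum (fun _ _ => Nat.zero_le _) (mem_univ j))
    (tendsto_apply_atTop j)

theorem prod_rpow_half_eq_sqrt (s : Finset ι) {x : ι → ℝ} (hx : ∀ i ∈ s, 0 ≤ x i)
    (k : ι → ℕ) : ∏ i ∈ s, x i ^ ((k i : ℝ) / 2) = √(∏ i ∈ s, x i ^ k i) := by
  rw [Real.sqrt_prod _ fun i hi => pow_nonneg (hx i hi) _]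
  refine prod_congr rfl fun i hi => ?_
  rw [Real.sqrt_eq_rpow, ← Real.rpow_natCast, ← Real.rpow_mul (hx i hi), mul_one_div]

end

namespace FockSob

variable {n : ℕ}

theorem fprod_eq_mul_prod_descFactorial {v k : Fin n → ℕ} (h : k ≤ v) :
    fprod v = fprod (fun j => v j - k j) * ∏ j, ((v j).descFactorial (k j) : ℝ) := by
  simp only [fprod, ← prod_mul_distrib]
  exact prod_congr rfl fun j _ => mod_cast (Nat.factorial_mul_descFactorial (h j)).symm

theorem factorial_eq_mul_descFactorial (hn : 1 ≤ n) (m s : ℕ) :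
    ((m + n - 1 + s).factorial : ℝ) = (n - 1 + s).factorial * (m + n - 1 + s).descFactorial m := by
  have h := Nat.factorial_mul_descFactorial (show m ≤ m + n - 1 + s by omega)
  rw [show m + n - 1 + s - m = n - 1 + s by omega] at h
  exact_mod_cast h.symm

theorem Tcoef_nonneg (m : ℕ) (β γ α : Fin n → ℕ) : 0 ≤ Tcoef n m β γ α := by
  unfold Tcoef fprod
  positivity

theorem Tcoef_sq_eq (hn : 1 ≤ n) (m : ℕ) {β γ α : Fin n → ℕ} (hγ : γ ≤ α) :
    Tcoef n m β γ α ^ 2 =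
      (∏ j, ((α j + β j).descFactorial (β j) : ℝ)) * (∏ j, ((α j + β j).descFactorial (γ j) : ℝ)) *
        (((m + n - 1 + msum fun j => α j + β j).descFactorial m : ℝ) ^ 2 /
          (((m + n - 1 + msum α).descFactorial m : ℝ) *
            (m + n - 1 + msum fun j => α j + β j - γ j).descFactorial m)) := by
  have hB := fprod_eq_mul_prod_descFactorial (v := fun j => α j + β j) (k := β) fun j => by simp
  have hG := fprod_eq_mul_prod_descFactorial (v := fun j => α j + β j) (k := γ)
    fun j => (hγ j).trans (Nat.le_add_right _ _)
  simp only [Nat.add_sub_cancel] at hB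
  have hne (v : Fin n → ℕ) : fprod v ≠ 0 := (prod_pos fun j _ => by positivity).ne'
  rw [Tcoef, mul_pow, Real.sq_sqrt (by unfold fprod; positivity)]
  simp only [factorial_eq_mul_descFactorial hn]
  field_simp [hne α, hne fun j => α j + β j - γ j]
  congr 1
  rw [sq]
  nth_rw 1 [hB]
  rw [hG]
  ring

theorem msum_add_cast (α β : Fin n → ℕ) :
    ((msum fun j => α j + β j : ℕ) : ℝ) = msum α + msum β := by
  simp only [msum, sum_add_distrib, Nat.cast_add]

theorem msum_add_sub_cast {α β γ : Fin n → ℕ} (hγ : γ ≤ α) :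
    ((msum fun j => α j + β j - γ j : ℕ) : ℝ) = msum α + (msum β - msum γ) := by
  simp only [msum, Nat.cast_sum, add_sub_assoc', ← sum_add_distrib, ← sum_sub_distrib]
  exact sum_congr rfl fun j _ => by
    rw [Nat.cast_sub ((hγ j).trans (Nat.le_add_right _ _)), Nat.cast_add]

theorem isEquivalent_Tcoef_sq (hn : 1 ≤ n) (m : ℕ) (β γ : Fin n → ℕ) :
    (fun α => Tcoef n m β γ α ^ 2) ~[atTop] fun α => ∏ j, (α j : ℝ) ^ (β j + γ j) := by
  have : Nonempty (Fin n) := ⟨⟨0, hn⟩⟩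
  have hcoord (j : Fin n) : Tendsto (fun α : Fin n → ℕ => (α j : ℝ)) atTop atTop :=
    tendsto_natCast_atTop_atTop.comp (tendsto_apply_atTop j)
  have hsum : Tendsto (fun α : Fin n → ℕ => (msum α : ℝ)) atTop atTop :=
    tendsto_natCast_atTop_atTop.comp tendsto_sum_apply_atTop
  have hγ : ∀ᶠ α in atTop, γ ≤ α := eventually_ge_atTop γ
  have hshift (k : Fin n → ℕ) :
      (fun α : Fin n → ℕ => ∏ j, ((α j + β j).descFactorial (k j) : ℝ)) ~[atTop]
        fun α => ∏ j, (α j : ℝ) ^ k j :=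
    IsEquivalent.finsetProd fun j _ => isEquivalent_descFactorial_comp
      (isEquivalent_of_eventually_eq_add_const (hcoord j) (c := β j) (.of_forall fun α => by simp))
      (hcoord j) _
  have hweight (s : (Fin n → ℕ) → ℕ) (c : ℝ) (hs : ∀ᶠ α in atTop, (s α : ℝ) = msum α + c) :
      (fun α => ((m + n - 1 + s α).descFactorial m : ℝ)) ~[atTop] fun α => (msum α : ℝ) ^ m :=
    isEquivalent_descFactorial_comp (isEquivalent_of_eventually_eq_add_const hsum
      (c := (m + n - 1 : ℕ) + c) (hs.mono fun α h => by push_cast [h]; ring)) hsum m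
  have hα := hweight msum 0 (.of_forall fun α => by simp)
  have hαβ := hweight (fun α => msum fun j => α j + β j) (msum β)
    (.of_forall fun α => msum_add_cast α β)
  have hαβγ := hweight (fun α => msum fun j => α j + β j - γ j) (msum β - msum γ)
    (hγ.mono fun α h => msum_add_sub_cast h)
  refine (((hshift β).mul (hshift γ)).mul ((hαβ.pow 2).div (hα.mul hαβγ))).congr_left ?_
    |>.congr_right ?_
  · filter_upwards [hγ] with α h
    exact (Tcoef_sq_eq hn m h).symm
  · filter_upwards [hsum.eventually_gt_atTop 0] with α h
    simp only [Pi.mul_apply, Pi.div_apply, Pi.pow_apply, ← prod_mul_distrib, ← pow_add]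
    field_simp
    ring

end FockSob

open FockSob in
theorem toeplitz_coefficient_asymptotics (n m : ℕ) (hn : 1 ≤ n) (β γ : Fin n → ℕ) :
    ∃ C : ℝ, 0 < C ∧
      Filter.Tendsto
        (fun α : Fin n → ℕ =>
          Tcoef n m β γ α / ∏ j, (α j : ℝ) ^ (((β j + γ j : ℕ) : ℝ) / 2))
        Filter.atTop (nhds C) := by
  refine ⟨1, one_pos, ?_⟩
  have hprod_ne : ∀ᶠ α : Fin n → ℕ in atTop, ∏ j, (α j : ℝ) ^ (β j + γ j) ≠ 0 := by
    filter_upwards [eventually_ge_atTop 1] with α h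
    exact prod_ne_zero_iff.mpr fun j _ =>
      pow_ne_zero _ (Nat.cast_ne_zero.mpr (Nat.one_le_iff_ne_zero.mp (h j)))
  have hratio := ((isEquivalent_iff_tendsto_one hprod_ne).mp (isEquivalent_Tcoef_sq hn m β γ)).sqrt
  rw [Real.sqrt_one] at hratio
  refine hratio.congr fun α => ?_
  rw [prod_rpow_half_eq_sqrt _ (fun j _ => Nat.cast_nonneg _), Pi.div_apply,
    Real.sqrt_div' _ (prod_nonneg fun j _ => by positivity), Real.sqrt_sq (Tcoef_nonneg m β γ α)]
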